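/- Let X be a pseudocompact countably κ-metrizable space with countable κ-metric ρ and extensions ρ̄(·, F'∩X) to βX as above. If {F'_n : n ∈ ω} ⊆ RC(βX) is increasing (F'_n ⊆ F'_{n+1}) and F' = cl_{βX}(⋃_n F'_n), then for every p ∈ βX, ρ̄(p, F'∩X) = inf_n ρ̄(p, F'_n∩X). -/

import Mathlib

open Set Topology

section Defs

variable {X : Type*}

/-- A set is regular closed if it equals the closure of its interior. -/
def IsRegClosed [TopologicalSpace X] (C : Set X) : Prop := closure (interior C) = C

/-- A set is regular open if it equals the interior of its closure. -/
def IsRegOpen [TopologicalSpace X] (V : Set X) : Prop := interior (closure V) = V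

/-- A countable κ-metric: axioms (K1)-(K3) and (K4_ω). -/
structure IsCountKappaMetric [TopologicalSpace X] (ρ : X → Set X → ℝ) : Prop where
  nonneg : ∀ x C, IsRegClosed C → 0 ≤ ρ x C
  k1 : ∀ x C, IsRegClosed C → (ρ x C = 0 ↔ x ∈ C)
  k2 : ∀ x C D, IsRegClosed C → IsRegClosed D → C ⊆ D → ρ x D ≤ ρ x C
  k3 : ∀ C, IsRegClosed C → Continuous fun x => ρ x C
  k4omega : ∀ C : ℕ → Set X, (∀ n, IsRegClosed (C n)) → (∀ n, C n ⊆ C (n + 1)) →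
    ∀ x, ρ x (closure (⋃ n, C n)) = ⨅ n, ρ x (C n)

/-- Axiom (K4): the infimum identity for arbitrary nonempty totally ordered
(by inclusion) families of regular closed sets. -/
def K4Chains [TopologicalSpace X] (ρ : X → Set X → ℝ) : Prop :=
  ∀ 𝒞 : Set (Set X), 𝒞.Nonempty → (∀ C ∈ 𝒞, IsRegClosed C) →
    (∀ C ∈ 𝒞, ∀ D ∈ 𝒞, C ⊆ D ∨ D ⊆ C) →
    ∀ x, ρ x (closure (⋃₀ 𝒞)) = sInf ((ρ x) '' 𝒞)

/-- A (full) κ-metric: axioms (K1)-(K4). -/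
structure IsKappaMetric [TopologicalSpace X] (ρ : X → Set X → ℝ)
    extends IsCountKappaMetric ρ : Prop where
  k4 : K4Chains ρ

/-- Countable chain condition. -/
def CCCSpace (X : Type*) [TopologicalSpace X] : Prop :=
  ∀ 𝒪 : Set (Set X), (∀ U ∈ 𝒪, IsOpen U ∧ U.Nonempty) →
    𝒪.PairwiseDisjoint id → 𝒪.Countable

/-- Pseudocompactness: every continuous real-valued function is bounded. -/
def Pseudocompact (X : Type*) [TopologicalSpace X] : Prop :=
  ∀ f : X → ℝ, Continuous f → ∃ M, ∀ x, |f x| ≤ M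

/-- d-open maps. -/
def IsDOpen {Y : Type*} [TopologicalSpace X] [TopologicalSpace Y] (f : X → Y) : Prop :=
  ∀ U : Set X, IsOpen U → f '' U ⊆ interior (closure (f '' U))

/-- Q-admissible families of regular open sets with respect to ρ. -/
def QAdmissible [TopologicalSpace X] (ρ : X → Set X → ℝ) (P : Set (Set X)) : Prop :=
  (∀ V ∈ P, IsRegOpen V) ∧
  (∀ V ∈ P, ∀ q : ℚ,
    interior ((fun x => ρ x (closure V)) ⁻¹' Iic (q : ℝ)) ∈ P ∧
    interior ((fun x => ρ x (closure V)) ⁻¹' Ici (q : ℝ)) ∈ P) ∧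
  (∀ V ∈ P, interior Vᶜ ∈ P) ∧
  (∀ U ∈ P, ∀ V ∈ P, U ∩ V ∈ P ∧ interior (closure (U ∪ V)) ∈ P)

/-- The equivalence relation ∼_P. -/
def pSetoid (P : Set (Set X)) : Setoid X where
  r x y := ∀ V ∈ P, (x ∈ V ↔ y ∈ V)
  iseqv := ⟨fun _ _ _ => Iff.rfl, fun h V hV => (h V hV).symm,
    fun h1 h2 V hV => (h1 V hV).trans (h2 V hV)⟩

/-- The quotient X_P. -/
def XP (P : Set (Set X)) : Type _ := Quotient (pSetoid P)

/-- The quotient map q : X → X_P. -/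
def qP (P : Set (Set X)) : X → XP P := Quotient.mk (pSetoid P)

/-- The topology on X_P generated by images of members of P. -/
def topXP [TopologicalSpace X] (P : Set (Set X)) : TopologicalSpace (XP P) :=
  TopologicalSpace.generateFrom ((fun V => qP P '' V) '' P)

end Defs

/-!
Both sides are continuous in `p`, the left one lies below the decreasing sequence on the
right, and they agree on the dense copy of `X` in `βX` by (K4_ω) for `ρ`, since pulling back
to `X` preserves regular closedness and commutes with closures of unions of regular closed
sets. Agreement on `X` passes to `βX` because `X` is pseudocompact: were the gap at `p`
larger than `ε`, the sets where `ρ̄(·, F'_n) - ρ̄(·, F') > ε` would pull back to a decreasing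
sequence of nonempty open subsets of `X`, and a common point of their closures, which exists
by pseudocompactness, would still have gap at least `ε`.
-/

section RegClosed

variable {X : Type*} [TopologicalSpace X]

lemma IsOpen.isRegClosed_closure {U : Set X} (hU : IsOpen U) : IsRegClosed (closure U) :=
  subset_antisymm (closure_minimal interior_subset isClosed_closure)
    (closure_mono (hU.subset_interior_iff.mpr subset_closure))

lemma closure_iUnion_interior_of_isRegClosed {ι : Type*} {F : ι → Set X}
    (hF : ∀ i, IsRegClosed (F i)) :
    closure (⋃ i, interior (F i)) = closure (⋃ i, F i) := by
  refine subset_antisymm (closure_mono (iUnion_mono fun i => interior_subset)) ?_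
  refine closure_minimal (iUnion_subset fun i => ?_) isClosed_closure
  rw [← hF i]
  exact closure_mono (subset_iUnion (fun i => interior (F i)) i)

lemma isRegClosed_closure_iUnion {ι : Type*} {F : ι → Set X} (hF : ∀ i, IsRegClosed (F i)) :
    IsRegClosed (closure (⋃ i, F i)) := by
  rw [← closure_iUnion_interior_of_isRegClosed hF]
  exact (isOpen_iUnion fun i => isOpen_interior).isRegClosed_closure

end RegClosed

namespace IsDenseInducing

variable {X Y : Type*} [TopologicalSpace X] [TopologicalSpace Y] {u : X → Y}

lemma preimage_closure_of_isOpen (hu : IsDenseInducing u) {U : Set Y} (hU : IsOpen U) :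
    u ⁻¹' closure U = closure (u ⁻¹' U) := by
  refine subset_antisymm ?_ (hu.continuous.closure_preimage_subset U)
  rw [hu.isInducing.closure_eq_preimage_closure_image, image_preimage_eq_inter_range]
  exact preimage_mono (closure_minimal (hu.dense.open_subset_closure_inter hU) isClosed_closure)

lemma isRegClosed_preimage (hu : IsDenseInducing u) {F : Set Y} (hF : IsRegClosed F) :
    IsRegClosed (u ⁻¹' F) := by
  rw [← hF, hu.preimage_closure_of_isOpen isOpen_interior]
  exact (isOpen_interior.preimage hu.continuous).isRegClosed_closure

lemma preimage_closure_iUnion_of_isRegClosed (hu : IsDenseInducing u) {ι : Type*}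
    {F : ι → Set Y} (hF : ∀ i, IsRegClosed (F i)) :
    u ⁻¹' closure (⋃ i, F i) = closure (⋃ i, u ⁻¹' F i) := by
  refine subset_antisymm ?_ ?_
  · rw [← closure_iUnion_interior_of_isRegClosed hF,
      hu.preimage_closure_of_isOpen (isOpen_iUnion fun i => isOpen_interior), preimage_iUnion]
    exact closure_mono (iUnion_mono fun i => preimage_mono interior_subset)
  · rw [← preimage_iUnion]
    exact hu.continuous.closure_preimage_subset _

end IsDenseInducing

section Pseudocompact

variable {X : Type*} [TopologicalSpace X]

lemma locallyFinite_of_antitone_of_iInter_closure_eq_empty {V : ℕ → Set X} (hV : Antitone V)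
    (h : ⋂ n, closure (V n) = ∅) : LocallyFinite V := by
  intro x
  obtain ⟨m, hm⟩ : ∃ m, x ∉ closure (V m) := by
    simpa using eq_empty_iff_forall_notMem.1 h x
  refine ⟨(closure (V m))ᶜ, isClosed_closure.isOpen_compl.mem_nhds hm,
    (finite_Iio m).subset ?_⟩
  rintro n ⟨y, hyn, hym⟩
  by_contra hmn
  exact hym (subset_closure (hV (not_lt.1 hmn) hyn))

lemma Pseudocompact.not_locallyFinite [CompletelyRegularSpace X] (hX : Pseudocompact X)
    {V : ℕ → Set X} (hV : ∀ n, IsOpen (V n)) (hne : ∀ n, (V n).Nonempty) :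
    ¬ LocallyFinite V := by
  intro hfin
  choose x hx using hne
  choose f hfc hf0 hf1 using fun n =>
    CompletelyRegularSpace.completely_regular (x n) (V n)ᶜ (hV n).isClosed_compl
      (not_not_intro (hx n))
  let g : ℕ → X → ℝ := fun n y => n * (1 - f n y)
  have hg_support : ∀ n, Function.support (g n) ⊆ V n := by
    intro n y hy
    by_contra hyV
    exact hy (by simp [g, hf1 n hyV])
  have hg_nonneg : ∀ n y, 0 ≤ g n y := fun n y =>
    mul_nonneg n.cast_nonneg (sub_nonneg.2 (f n y).2.2)
  have hsum_cont : Continuous fun y => ∑ᶠ n, g n y :=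
    continuous_finsum (fun n => by fun_prop) (hfin.subset hg_support)
  obtain ⟨M, hM⟩ := hX _ hsum_cont
  obtain ⟨n, hn⟩ := exists_nat_gt M
  have hsum_ge : (n : ℝ) ≤ ∑ᶠ k, g k (x n) := by
    have hfin_n : (Function.support fun k => g k (x n)).Finite :=
      (hfin.point_finite (x n)).subset fun k hk => hg_support k hk
    simpa [g, hf0 n] using single_le_finsum n hfin_n fun k => hg_nonneg k (x n)
  linarith [le_abs_self (∑ᶠ k, g k (x n)), hM (x n)]

lemma Pseudocompact.nonempty_iInter_closure [CompletelyRegularSpace X] (hX : Pseudocompact X)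
    {V : ℕ → Set X} (hV : ∀ n, IsOpen (V n)) (hne : ∀ n, (V n).Nonempty) (hanti : Antitone V) :
    (⋂ n, closure (V n)).Nonempty := by
  by_contra h
  exact hX.not_locallyFinite hV hne
    (locallyFinite_of_antitone_of_iInter_closure_eq_empty hanti (not_nonempty_iff_eq_empty.1 h))

theorem Pseudocompact.eq_iInf_of_denseRange [CompletelyRegularSpace X] (hX : Pseudocompact X)
    {Y : Type*} [TopologicalSpace Y] {u : X → Y} (huc : Continuous u) (hu : DenseRange u)
    {f : ℕ → Y → ℝ} {g : Y → ℝ} (hf : ∀ n, Continuous (f n)) (hg : Continuous g)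
    (hgf : ∀ n q, g q ≤ f n q) (hanti : ∀ n q, f (n + 1) q ≤ f n q)
    (heq : ∀ x, g (u x) = ⨅ n, f n (u x)) (p : Y) :
    g p = ⨅ n, f n p := by
  refine le_antisymm (le_ciInf fun n => hgf n p) ?_
  by_contra! hlt
  obtain ⟨ε, hε_pos, hε⟩ := exists_between (sub_pos.2 hlt)
  let W : ℕ → Set Y := fun n => {q | ε < f n q - g q}
  have hW_open : ∀ n, IsOpen (W n) := fun n => isOpen_lt continuous_const ((hf n).sub hg)
  have hpW : ∀ n, p ∈ W n := fun n => by
    have := ciInf_le ⟨g p, forall_mem_range.2 fun n => hgf n p⟩ n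
    show ε < f n p - g p
    linarith
  have hW_anti : Antitone W := antitone_nat_of_succ_le fun n q (hq : ε < _) => by
    show ε < f n q - g q
    linarith [hanti n q]
  obtain ⟨y, hy⟩ := hX.nonempty_iInter_closure (V := fun n => u ⁻¹' W n)
    (fun n => (hW_open n).preimage huc) (fun n => hu.exists_mem_open (hW_open n) ⟨p, hpW n⟩)
    (fun _ _ hmn => preimage_mono (hW_anti hmn))
  have hgap : ∀ n, ε + g (u y) ≤ f n (u y) := fun n =>
    le_sub_iff_add_le.1 <| closure_minimal (fun _ hx => le_of_lt hx)
      (isClosed_le continuous_const (((hf n).sub hg).comp huc)) (mem_iInter.1 hy n)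
  have hle := le_ciInf hgap
  rw [← heq y] at hle
  linarith

end Pseudocompact

/-- the extension ρ̄ satisfies (K4_ω) on βX. -/
theorem stmt17 {X : Type*} [TopologicalSpace X] [T35Space X]
    (hpc : Pseudocompact X) (ρ : X → Set X → ℝ) (hρ : IsCountKappaMetric ρ)
    (ρbar : StoneCech X → Set (StoneCech X) → ℝ)
    (hcont : ∀ F' : Set (StoneCech X), IsRegClosed F' → Continuous fun p => ρbar p F')
    (hext : ∀ F' : Set (StoneCech X), IsRegClosed F' →
      ∀ x : X, ρbar (stoneCechUnit x) F' = ρ x (stoneCechUnit ⁻¹' F'))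
    (F' : ℕ → Set (StoneCech X)) (hF' : ∀ n, IsRegClosed (F' n))
    (hmono : ∀ n, F' n ⊆ F' (n + 1)) (p : StoneCech X) :
    ρbar p (closure (⋃ n, F' n)) = ⨅ n, ρbar p (F' n) := by
  have hu : IsDenseInducing (stoneCechUnit : X → StoneCech X) := isDenseInducing_stoneCechUnit
  set F := closure (⋃ n, F' n)
  have hF : IsRegClosed F := isRegClosed_closure_iUnion hF'
  have hρbar_anti : ∀ {C D}, IsRegClosed C → IsRegClosed D → C ⊆ D → ∀ q, ρbar q D ≤ ρbar q C :=
    fun hC hD hCD q => hu.dense.induction_on q (isClosed_le (hcont _ hD) (hcont _ hC)) fun x => by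
      rw [hext _ hC, hext _ hD]
      exact hρ.k2 x _ _ (hu.isRegClosed_preimage hC) (hu.isRegClosed_preimage hD)
        (preimage_mono hCD)
  have hF_eq_iInf_on_X : ∀ x, ρbar (stoneCechUnit x) F = ⨅ n, ρbar (stoneCechUnit x) (F' n) := by
    intro x
    rw [hext F hF, hu.preimage_closure_iUnion_of_isRegClosed hF',
      hρ.k4omega _ (fun n => hu.isRegClosed_preimage (hF' n)) (fun n => preimage_mono (hmono n))]
    exact iInf_congr fun n => (hext _ (hF' n) x).symm
  exact hpc.eq_iInf_of_denseRange hu.continuous hu.dense (fun n => hcont _ (hF' n)) (hcont F hF)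
    (fun n => hρbar_anti (hF' n) hF ((subset_iUnion F' n).trans subset_closure))
    (fun n => hρbar_anti (hF' n) (hF' (n + 1)) (hmono n)) hF_eq_iInf_on_X p
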